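/- arXiv:2203.13146 — 2 statements merged into one kernel-verified Lean document; each statement's English description precedes it below -/
import Mathlib

section
/- KKT optimality conditions for the undirected minimum-cost flow problem: Let b ∈ ℝ^V be a balanced demand and let x ∈ ℝ^E satisfy Γx = b. Then x minimizes ∑_{e∈E} F_e(y_e) over all y ∈ ℝ^E with Γy = b, if and only if there exists a potential vector φ ∈ ℝ^V such that f_e(x_e) = φ_{h(e)} − φ_{t(e)} for every edge e ∈ E. -/
open Matrix

/-- Sum of a potential against an incidence column. -/
private lemma sum_pot_incidence {V : Type*} [Fintype V] [DecidableEq V]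
    (a b : V) (hab : a ≠ b) (φ : V → ℝ) :
    ∑ v, φ v * (if v = a then (1:ℝ) else if v = b then -1 else 0) = φ a - φ b := by
  have key : ∀ v, φ v * (if v = a then (1:ℝ) else if v = b then -1 else 0)
      = (if v = a then φ v else 0) + (if v = b then -φ v else 0) := by
    intro v
    by_cases h1 : v = a
    · subst h1
      simp [hab]
    · by_cases h2 : v = b
      · subst h2
        simp [h1]
      · simp [h1, h2]
  rw [Finset.sum_congr rfl fun v _ => key v, Finset.sum_add_distrib,
    Finset.sum_ite_eq' Finset.univ a (fun v => φ v),
    Finset.sum_ite_eq' Finset.univ b (fun v => -φ v)]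
  simp [sub_eq_add_neg]

/-- Gradient inequality for the integral of a monotone function. -/
private lemma grad_ineq (f : ℝ → ℝ) (hc : Continuous f) (hm : StrictMono f) (x y : ℝ) :
    f x * (y - x) ≤ (∫ s in (0:ℝ)..y, f s) - ∫ s in (0:ℝ)..x, f s := by
  have hint : ∀ a b : ℝ, IntervalIntegrable f MeasureTheory.volume a b :=
    fun a b => hc.intervalIntegrable a b
  have hsub : (∫ s in (0:ℝ)..y, f s) - (∫ s in (0:ℝ)..x, f s) = ∫ s in x..y, f s :=
    intervalIntegral.integral_interval_sub_left (hint 0 y) (hint 0 x)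
  rw [hsub]
  rcases le_total x y with hxy | hyx
  · have hmono : ∀ s ∈ Set.Icc x y, f x ≤ f s := fun s hs => hm.monotone hs.1
    have h1 : (∫ _ in x..y, f x) ≤ ∫ s in x..y, f s :=
      intervalIntegral.integral_mono_on hxy (intervalIntegrable_const) (hint x y)
        (fun s hs => hmono s hs)
    rw [intervalIntegral.integral_const, smul_eq_mul] at h1
    linarith
  · have hmono : ∀ s ∈ Set.Icc y x, f s ≤ f x := fun s hs => hm.monotone hs.2
    have h1 : (∫ s in y..x, f s) ≤ ∫ _ in y..x, f x :=
      intervalIntegral.integral_mono_on hyx (hint y x) (intervalIntegrable_const)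
        (fun s hs => hmono s hs)
    rw [intervalIntegral.integral_const, smul_eq_mul] at h1
    rw [intervalIntegral.integral_symm]
    linarith

/-- A vector orthogonal to the kernel of `A *ᵥ ·` is in the range of `Aᵀ *ᵥ ·`. -/
private lemma exists_potential {V E : Type*} [Fintype V] [Fintype E]
    (A : Matrix V E ℝ) (c : E → ℝ)
    (hc : ∀ z : E → ℝ, A *ᵥ z = 0 → ∑ e, c e * z e = 0) :
    ∃ φ : V → ℝ, Aᵀ *ᵥ φ = c := by
  classical
  let M : EuclideanSpace ℝ E →ₗ[ℝ] EuclideanSpace ℝ V := Matrix.toEuclideanLin A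
  let L : EuclideanSpace ℝ V →ₗ[ℝ] EuclideanSpace ℝ E := Matrix.toEuclideanLin Aᵀ
  have hL : L = LinearMap.adjoint M := by
    have hAt : (Aᵀ : Matrix E V ℝ) = Aᴴ := by
      ext i j; simp [Matrix.conjTranspose_apply, Matrix.transpose_apply]
    show Matrix.toEuclideanLin Aᵀ = LinearMap.adjoint (Matrix.toEuclideanLin A)
    rw [hAt]
    exact Matrix.toEuclideanLin_conjTranspose_eq_adjoint A
  have hker : LinearMap.ker M = (LinearMap.range L)ᗮ := by
    ext z
    simp only [LinearMap.mem_ker, Submodule.mem_orthogonal]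
    constructor
    · rintro hz _ ⟨u, rfl⟩
      rw [hL, LinearMap.adjoint_inner_left, hz, inner_zero_right]
    · intro hz
      have h0 : ∀ u, (inner ℝ u (M z) : ℝ) = 0 := fun u => by
        rw [← LinearMap.adjoint_inner_left, ← hL]
        exact hz _ ⟨u, rfl⟩
      have := h0 (M z)
      rwa [inner_self_eq_zero] at this
  have hrange : LinearMap.range L = (LinearMap.ker M)ᗮ := by
    rw [hker, Submodule.orthogonal_orthogonal]
  have hcmem : ((WithLp.equiv 2 (E → ℝ)).symm c) ∈ (LinearMap.ker M)ᗮ := by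
    rw [Submodule.mem_orthogonal]
    intro z hz
    rw [LinearMap.mem_ker] at hz
    have hz' : A *ᵥ (WithLp.equiv 2 (E → ℝ)) z = 0 := by
      have := congrArg (WithLp.equiv 2 (V → ℝ)) hz
      simpa [Matrix.ofLp_toEuclideanLin_apply, M] using this
    have := hc ((WithLp.equiv 2 (E → ℝ)) z) hz'
    rw [PiLp.inner_apply]
    simpa [mul_comm] using this
  rw [← hrange] at hcmem
  obtain ⟨φ, hφ⟩ := hcmem
  refine ⟨(WithLp.equiv 2 (V → ℝ)) φ, ?_⟩
  have := congrArg (WithLp.equiv 2 (E → ℝ)) hφ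
  simpa [Matrix.ofLp_toEuclideanLin_apply, L] using this

/-- KKT optimality conditions for the undirected minimum-cost flow problem. -/
theorem kkt_undirected_mincost_flow
    {V E : Type*} [Fintype V] [Fintype E] [DecidableEq V]
    (t h : E → V) (hth : ∀ e, h e ≠ t e)
    (Γ : Matrix V E ℝ)
    (hΓ : ∀ v e, Γ v e = if v = h e then 1 else if v = t e then -1 else 0)
    (f : E → ℝ → ℝ)
    (hf_cont : ∀ e, Continuous (f e))
    (hf_mono : ∀ e, StrictMono (f e))
    (F : E → ℝ → ℝ)
    (hF : ∀ e x, F e x = ∫ s in (0:ℝ)..x, f e s)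
    (b : V → ℝ) (hb : ∑ v, b v = 0)
    (x : E → ℝ) (hxfeas : Γ *ᵥ x = b) :
    (∀ y : E → ℝ, Γ *ᵥ y = b →
        ∑ e, F e (x e) ≤ ∑ e, F e (y e)) ↔
    (∃ φ : V → ℝ, ∀ e, f e (x e) = φ (h e) - φ (t e)) := by
  classical
  constructor
  · -- optimality implies existence of a potential
    intro hopt
    set c : E → ℝ := fun e => f e (x e) with hc_def
    have horth : ∀ z : E → ℝ, Γ *ᵥ z = 0 → ∑ e, c e * z e = 0 := by
      intro z hz
      -- the one-variable function along direction z
      set g : ℝ → ℝ := fun ε => ∑ e, F e (x e + ε * z e) with hg_def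
      have hfeas : ∀ ε : ℝ, Γ *ᵥ (fun e => x e + ε * z e) = b := by
        intro ε
        have : (fun e => x e + ε * z e) = x + ε • z := by
          funext e; simp [mul_comm]
        rw [this, Matrix.mulVec_add, Matrix.mulVec_smul, hz, hxfeas]
        simp
      have hmin : IsLocalMin g 0 := by
        have hall : ∀ ε, g 0 ≤ g ε := by
          intro ε
          have := hopt (fun e => x e + ε * z e) (hfeas ε)
          simpa [hg_def] using this
        exact Filter.Eventually.of_forall hall
      have hderiv : HasDerivAt g (∑ e, c e * z e) 0 := by
        have : ∀ e ∈ Finset.univ, HasDerivAt (fun ε : ℝ => F e (x e + ε * z e))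
            (c e * z e) 0 := by
          intro e _
          have houter : HasDerivAt (fun w : ℝ => ∫ s in (0:ℝ)..w, f e s)
              (f e (x e)) (x e) :=
            ((hf_cont e).integral_hasStrictDerivAt 0 (x e)).hasDerivAt
          have hinner : HasDerivAt (fun ε : ℝ => x e + ε * z e) (z e) 0 := by
            simpa using ((hasDerivAt_id (0:ℝ)).mul_const (z e)).const_add (x e)
          have houter' : HasDerivAt (fun w : ℝ => ∫ s in (0:ℝ)..w, f e s)
              (f e (x e)) ((fun ε : ℝ => x e + ε * z e) 0) := by
            simpa using houter
          have hcomp := houter'.comp 0 hinner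
          have heq : (fun ε : ℝ => F e (x e + ε * z e)) =
              (fun w : ℝ => ∫ s in (0:ℝ)..w, f e s) ∘ (fun ε : ℝ => x e + ε * z e) := by
            funext ε; simp [Function.comp, hF]
          rw [heq]
          exact hcomp
        simpa [hg_def] using HasDerivAt.fun_sum this
      have := hmin.hasDerivAt_eq_zero hderiv
      exact this
    obtain ⟨φ, hφ⟩ := exists_potential Γ c horth
    refine ⟨φ, fun e => ?_⟩
    have := congrFun hφ e
    rw [Matrix.mulVec, dotProduct] at this
    have hcol : ∑ v, Γᵀ e v * φ v = φ (h e) - φ (t e) := by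
      have : ∀ v, Γᵀ e v * φ v
          = φ v * (if v = h e then (1:ℝ) else if v = t e then -1 else 0) := by
        intro v
        rw [Matrix.transpose_apply, hΓ, mul_comm]
      rw [Finset.sum_congr rfl fun v _ => this v]
      exact sum_pot_incidence (h e) (t e) (hth e) φ
    rw [hcol] at this
    exact this.symm
  · -- a potential implies optimality
    rintro ⟨φ, hφ⟩ y hy
    have key : ∀ e, f e (x e) * (y e - x e) ≤ F e (y e) - F e (x e) := by
      intro e
      rw [hF e (y e), hF e (x e)]
      exact grad_ineq (f e) (hf_cont e) (hf_mono e) (x e) (y e)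
    have hsum : ∑ e, f e (x e) * (y e - x e) = 0 := by
      have hw : Γ *ᵥ (y - x) = 0 := by
        rw [Matrix.mulVec_sub, hy, hxfeas, sub_self]
      have h1 : ∑ e, f e (x e) * (y e - x e)
          = ∑ e, (∑ v, φ v * Γ v e) * (y - x) e := by
        apply Finset.sum_congr rfl
        intro e _
        have : ∑ v, φ v * Γ v e = φ (h e) - φ (t e) := by
          have : ∀ v, φ v * Γ v e
              = φ v * (if v = h e then (1:ℝ) else if v = t e then -1 else 0) := by
            intro v; rw [hΓ]
          rw [Finset.sum_congr rfl fun v _ => this v]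
          exact sum_pot_incidence (h e) (t e) (hth e) φ
        rw [this, ← hφ e]
        simp [Pi.sub_apply]
      have h2 : ∑ e, (∑ v, φ v * Γ v e) * (y - x) e
          = φ ⬝ᵥ (Γ *ᵥ (y - x)) := by
        rw [Matrix.dotProduct_mulVec]
        simp [Matrix.vecMul, dotProduct]
      rw [h1, h2, hw, dotProduct_zero]
    have := Finset.sum_le_sum fun e (_ : e ∈ Finset.univ) => key e
    rw [Finset.sum_sub_distrib] at this
    linarith [hsum ▸ this]
end

section
/- Thomson's principle: Fix a vertex v₁ ∈ V, a set S ⊆ E, and a vector a ∈ ℝ^E with a_e > 0 for all e. Let A = diag(a), let C = diag(c) with c_e = 1/a_e for e ∈ S and c_e = 0 for e ∉ S, and let L = Γ C Γ^T; assume the reduced matrix L̂ is invertible. Let b ∈ ℝ^V be balanced and set x := C Γ^T L* b. Then Γx = b, x_e = 0 for all e ∉ S, and for every y ∈ ℝ^E with Γy = b and y_e = 0 for all e ∉ S, one has x^T A x ≤ y^T A y. -/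
open Matrix

/-- `M` with the row and column of `v₁` deleted. -/
noncomputable def reducedM {V : Type*} [Fintype V] [DecidableEq V] (v₁ : V)
    (M : Matrix V V ℝ) : Matrix {v : V // v ≠ v₁} {v : V // v ≠ v₁} ℝ :=
  M.submatrix Subtype.val Subtype.val

/-- The generalized inverse of `M`: the inverse of the reduced matrix, extended by
zeros on the row and column of `v₁`. -/
noncomputable def starM {V : Type*} [Fintype V] [DecidableEq V] (v₁ : V)
    (M : Matrix V V ℝ) : Matrix V V ℝ :=
  fun i j =>
    if hi : i = v₁ then 0 else if hj : j = v₁ then 0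
    else (reducedM v₁ M)⁻¹ ⟨i, hi⟩ ⟨j, hj⟩

private lemma sum_split {V : Type*} [Fintype V] [DecidableEq V] (v₁ : V) (f : V → ℝ) :
    ∑ v, f v = f v₁ + ∑ v : {v : V // v ≠ v₁}, f v := by
  rw [Fintype.sum_eq_add_sum_compl v₁ f, Finset.sum_subtype]
  intro x; simp

/-- Thomson's principle. -/
theorem thomson_principle
    {V E : Type*} [Fintype V] [Fintype E] [DecidableEq V] [DecidableEq E]
    (t h : E → V) (hth : ∀ e, h e ≠ t e)
    (Γ : Matrix V E ℝ)
    (hΓ : ∀ v e, Γ v e = if v = h e then 1 else if v = t e then -1 else 0)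
    (v₁ : V) (S : Finset E)
    (a : E → ℝ) (ha : ∀ e, 0 < a e)
    (A : Matrix E E ℝ) (hA : A = Matrix.diagonal a)
    (C : Matrix E E ℝ)
    (hC : C = Matrix.diagonal fun e => if e ∈ S then 1 / a e else 0)
    (L : Matrix V V ℝ) (hL : L = Γ * C * Γᵀ)
    (hinv : IsUnit (reducedM v₁ L).det)
    (b : V → ℝ) (hb : ∑ v, b v = 0)
    (x : E → ℝ) (hx : x = (C * Γᵀ) *ᵥ (starM v₁ L *ᵥ b)) :
    Γ *ᵥ x = b ∧ (∀ e ∉ S, x e = 0) ∧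
    ∀ y : E → ℝ, Γ *ᵥ y = b → (∀ e ∉ S, y e = 0) →
      x ⬝ᵥ (A *ᵥ x) ≤ y ⬝ᵥ (A *ᵥ y) := by
  set φ : V → ℝ := starM v₁ L *ᵥ b with hφdef
  -- column sums of Γ vanish
  have hΓsum : ∀ e, ∑ v, Γ v e = 0 := by
    intro e
    have key : ∀ v, Γ v e =
        (if v = h e then (1:ℝ) else 0) + (if v = t e then (-1:ℝ) else 0) := by
      intro v
      rw [hΓ]
      split_ifs with h1 h2 <;> try norm_num
      exact hth e (h1.symm.trans h2)
    simp [key, Finset.sum_add_distrib, Finset.sum_ite_eq']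
  -- column sums of L vanish
  have hLsum : ∀ w, ∑ v, L v w = 0 := by
    intro w
    have hL' : L = Γ * (C * Γᵀ) := by rw [hL, Matrix.mul_assoc]
    simp only [hL', Matrix.mul_apply]
    rw [Finset.sum_comm]
    simp [← Finset.sum_mul, hΓsum]
  -- values of φ
  have hφ0 : φ v₁ = 0 := by
    simp [hφdef, Matrix.mulVec, dotProduct, starM]
  set b' : {v : V // v ≠ v₁} → ℝ := fun w => b w with hb'
  have hφ' : ∀ w : {v : V // v ≠ v₁}, φ w = ((reducedM v₁ L)⁻¹ *ᵥ b') w := by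
    intro w
    show ∑ u, starM v₁ L w u * b u = _
    rw [sum_split v₁]
    have h0 : starM v₁ L w v₁ = 0 := by
      simp [starM]
    rw [h0, zero_mul, zero_add]
    refine Finset.sum_congr rfl fun u _ => ?_
    show starM v₁ L w u * b u = (reducedM v₁ L)⁻¹ w u * b' u
    rw [starM]
    rw [dif_neg w.2, dif_neg u.2]
  -- L *ᵥ φ = b
  have main : ∀ v, v ≠ v₁ → (L *ᵥ φ) v = b v := by
    intro v hv
    show ∑ w, L v w * φ w = b v
    rw [sum_split v₁, hφ0, mul_zero, zero_add]
    have step : ∑ w : {v : V // v ≠ v₁}, L v w * φ w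
        = (reducedM v₁ L *ᵥ ((reducedM v₁ L)⁻¹ *ᵥ b')) ⟨v, hv⟩ := by
      refine Finset.sum_congr rfl fun w _ => ?_
      rw [hφ' w]
      rfl
    rw [step, Matrix.mulVec_mulVec, Matrix.mul_nonsing_inv _ hinv, Matrix.one_mulVec]
  have hv₁ : (L *ᵥ φ) v₁ = b v₁ := by
    have hsum : ∑ v, (L *ᵥ φ) v = 0 := by
      show ∑ v, ∑ w, L v w * φ w = 0
      rw [Finset.sum_comm]
      simp [← Finset.sum_mul, hLsum]
    have h1 := sum_split v₁ (fun v => (L *ᵥ φ) v)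
    have h2 := sum_split v₁ b
    rw [hsum] at h1
    rw [hb] at h2
    have h3 : ∑ v : {v : V // v ≠ v₁}, (L *ᵥ φ) v = ∑ v : {v : V // v ≠ v₁}, b v :=
      Finset.sum_congr rfl fun w _ => main w w.2
    simp only [h3] at h1
    linarith
  have hLφ : L *ᵥ φ = b := by
    funext v
    by_cases hv : v = v₁
    · subst hv; exact hv₁
    · exact main v hv
  -- part 1
  have part1 : Γ *ᵥ x = b := by
    rw [hx, Matrix.mulVec_mulVec, ← Matrix.mul_assoc, ← hL]
    exact hLφ
  -- pointwise formula for x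
  set g : E → ℝ := Γᵀ *ᵥ φ with hg
  have hx_pt : ∀ e, x e = (if e ∈ S then 1 / a e else 0) * g e := by
    intro e
    rw [hx, ← Matrix.mulVec_mulVec, hC]
    exact Matrix.mulVec_diagonal _ _ _
  have part2 : ∀ e ∉ S, x e = 0 := by
    intro e he
    rw [hx_pt e, if_neg he, zero_mul]
  refine ⟨part1, part2, ?_⟩
  intro y hy1 hy2
  have hcross : ∑ e, a e * x e * (y e - x e) = 0 := by
    have h1 : ∀ e, a e * x e * (y e - x e) = g e * (y e - x e) := by
      intro e
      by_cases he : e ∈ S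
      · have hfix : a e * x e = g e := by
          rw [hx_pt e, if_pos he]
          field_simp
          exact mul_div_cancel_left₀ _ (ha e).ne'
        rw [hfix]
      · rw [hy2 e he, part2 e he, sub_zero, mul_zero, mul_zero]
    calc ∑ e, a e * x e * (y e - x e) = ∑ e, g e * (y e - x e) :=
          Finset.sum_congr rfl fun e _ => h1 e
      _ = (Γᵀ *ᵥ φ) ⬝ᵥ (y - x) := rfl
      _ = φ ⬝ᵥ (Γ *ᵥ (y - x)) := by
          rw [Matrix.mulVec_transpose, ← Matrix.dotProduct_mulVec]
      _ = 0 := by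
          rw [Matrix.mulVec_sub, hy1, part1, sub_self, dotProduct_zero]
  have expand : y ⬝ᵥ (A *ᵥ y) - x ⬝ᵥ (A *ᵥ x)
      = ∑ e, a e * (y e - x e)^2 + 2 * ∑ e, a e * x e * (y e - x e) := by
    simp only [hA, dotProduct, Matrix.mulVec_diagonal, Finset.mul_sum,
      ← Finset.sum_sub_distrib, ← Finset.sum_add_distrib]
    exact Finset.sum_congr rfl fun e _ => by ring
  have hsq : 0 ≤ ∑ e, a e * (y e - x e)^2 :=
    Finset.sum_nonneg fun e _ => mul_nonneg (ha e).le (sq_nonneg _)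
  linarith
end
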